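/- On ℝ⁴ with the ART metric g = −dt² + sinh²(t/a) dx² + cosh²(t/a) dy² + dz² (a ≠ 0, on a region where sinh(t/a) ≠ 0), the vector field ξ = sin(y/a) cosh(x/a) ∂_t − coth(t/a) sin(y/a) sinh(x/a) ∂_x + tanh(t/a) cos(y/a) cosh(x/a) ∂_y is a Killing vector field: 𝓛_ξ g = 0. -/

import Mathlib

open scoped BigOperators
open Real

noncomputable section

variable {ι : Type*} [Fintype ι] [DecidableEq ι]

/-- Partial derivative of a function on coordinate space along the `i`-th coordinate. -/
def pd (f : (ι → ℝ) → ℝ) (i : ι) (x : ι → ℝ) : ℝ :=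
  fderiv ℝ f x (Pi.single i 1)

/-- Christoffel symbols `Γ^k_{ij}` of a metric `g` with inverse `ginv`, in coordinates. -/
def Christoffel (g ginv : (ι → ℝ) → Matrix ι ι ℝ) (k i j : ι) (x : ι → ℝ) : ℝ :=
  (1 / 2) * ∑ l, ginv x k l *
    (pd (fun y => g y l i) j x + pd (fun y => g y l j) i x - pd (fun y => g y i j) l x)

/-- Riemann curvature tensor `R^a_{bcd}` in coordinates. -/
def RiemannUp (g ginv : (ι → ℝ) → Matrix ι ι ℝ) (a b c d : ι) (x : ι → ℝ) : ℝ :=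
  pd (Christoffel g ginv a d b) c x - pd (Christoffel g ginv a c b) d x
    + ∑ e, Christoffel g ginv a c e x * Christoffel g ginv e d b x
    - ∑ e, Christoffel g ginv a d e x * Christoffel g ginv e c b x

/-- Fully covariant Riemann tensor `R_{abcd}`. -/
def RiemannLow (g ginv : (ι → ℝ) → Matrix ι ι ℝ) (a b c d : ι) (x : ι → ℝ) : ℝ :=
  ∑ e, g x a e * RiemannUp g ginv e b c d x

/-- Ricci tensor `R_{bd}`. -/
def RicciT (g ginv : (ι → ℝ) → Matrix ι ι ℝ) (b d : ι) (x : ι → ℝ) : ℝ :=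
  ∑ a, RiemannUp g ginv a b a d x

/-- Scalar curvature. -/
def ScalarCurv (g ginv : (ι → ℝ) → Matrix ι ι ℝ) (x : ι → ℝ) : ℝ :=
  ∑ b, ∑ d, ginv x b d * RicciT g ginv b d x

/-- Lie derivative of the metric `g` along the vector field `X`, in coordinates:
`(𝓛_X g)_{ab} = X^c ∂_c g_{ab} + g_{cb} ∂_a X^c + g_{ac} ∂_b X^c`. -/
def lieD (g : (ι → ℝ) → Matrix ι ι ℝ) (X : (ι → ℝ) → ι → ℝ) (x : ι → ℝ) :
    Matrix ι ι ℝ :=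
  Matrix.of fun a b =>
    (∑ c, X x c * pd (fun y => g y a b) c x)
      + (∑ c, g x c b * pd (fun y => X y c) a x)
      + (∑ c, g x a c * pd (fun y => X y c) b x)

/-- Covariant Hessian `f_{;ab} = ∂_a ∂_b f − Γ^c_{ab} ∂_c f`. -/
def covHess (g ginv : (ι → ℝ) → Matrix ι ι ℝ) (f : (ι → ℝ) → ℝ) (a b : ι)
    (x : ι → ℝ) : ℝ :=
  pd (pd f b) a x - ∑ c, Christoffel g ginv c a b x * pd f c x

end

/-! For a diagonal metric `g = diag h` the Lie derivative is
`(𝓛_ξ g)_{ab} = δ_{ab} ξ(h_a) + h_b ∂_a ξ^b + h_a ∂_b ξ^a`, so the Killing equations only involve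
the Jacobian of `ξ` and the `t`-derivatives of `sinh²(t/a)` and `cosh²(t/a)`. Each component of `ξ`
is a product of functions of one coordinate, so its Jacobian is explicit; the only identity needed
beyond clearing denominators is `cosh² − sinh² = 1`, which enters through the derivatives of
`coth` and `tanh`. -/

theorem HasDerivAt.comp_div_const {f : ℝ → ℝ} {f' a w : ℝ} (hf : HasDerivAt f f' (w / a)) :
    HasDerivAt (fun r => f (r / a)) (f' / a) w := by
  have h := hf.comp w ((hasDerivAt_id w).div_const a)
  rwa [mul_one_div] at h

theorem hasDerivAt_tanh (x : ℝ) : HasDerivAt tanh (1 / cosh x ^ 2) x := by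
  have hc : cosh x ≠ 0 := (cosh_pos x).ne'
  have h := (hasDerivAt_sinh x).div (hasDerivAt_cosh x) hc
  rw [show tanh = fun y => sinh y / cosh y from funext tanh_eq_sinh_div_cosh]
  refine h.congr_deriv ?_
  field_simp
  linarith [cosh_sq_sub_sinh_sq x]

theorem hasDerivAt_coth {x : ℝ} (hx : sinh x ≠ 0) :
    HasDerivAt (fun y => cosh y / sinh y) (-1 / sinh x ^ 2) x := by
  refine ((hasDerivAt_cosh x).div (hasDerivAt_sinh x) hx).congr_deriv ?_
  field_simp
  linarith [cosh_sq_sub_sinh_sq x]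

theorem ne_zero_of_sinh_div_ne_zero {t a : ℝ} (h : sinh (t / a) ≠ 0) : a ≠ 0 := by
  rintro rfl
  simp at h

section PartialDerivatives

variable {ι : Type*}

theorem pd_eq_of_hasFDerivAt [DecidableEq ι] {f : (ι → ℝ) → ℝ} {f' : (ι → ℝ) →L[ℝ] ℝ}
    {x : ι → ℝ} (hf : HasFDerivAt f f' x) (i : ι) : pd f i x = f' (Pi.single i 1) := by
  rw [pd, hf.fderiv]

theorem pd_const [DecidableEq ι] (c : ℝ) (i : ι) (x : ι → ℝ) : pd (fun _ => c) i x = 0 := by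
  simp [pd]

theorem HasDerivAt.hasFDerivAt_comp_apply [Fintype ι] {h : ℝ → ℝ} {d : ℝ} {j : ι} {x : ι → ℝ}
    (hd : HasDerivAt h d (x j)) :
    HasFDerivAt (fun y : ι → ℝ => h (y j)) (d • ContinuousLinearMap.proj (R := ℝ) j) x :=
  hd.comp_hasFDerivAt x (hasFDerivAt_apply j x)

theorem lieD_diagonal [Fintype ι] [DecidableEq ι] (h X : (ι → ℝ) → ι → ℝ) (x : ι → ℝ)
    (a b : ι) :
    lieD (fun y => Matrix.diagonal (h y)) X x a b =
      (if a = b then ∑ c, X x c * pd (fun y => h y a) c x else 0)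
        + h x b * pd (fun y => X y b) a x + h x a * pd (fun y => X y a) b x := by
  by_cases hab : a = b
  · subst hab
    simp [lieD, Matrix.diagonal_apply]
  · simp [lieD, Matrix.diagonal_apply, hab, pd_const]

theorem pd_sinh_div_sq [Fintype ι] [DecidableEq ι] (a : ℝ) (j i : ι) (x : ι → ℝ) :
    pd (fun y => sinh (y j / a) ^ 2) i x =
      if i = j then 2 * sinh (x j / a) * cosh (x j / a) / a else 0 := by
  rw [pd_eq_of_hasFDerivAt
    ((hasDerivAt_sinh _).comp_div_const.fun_pow 2).hasFDerivAt_comp_apply]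
  split_ifs with hij
  · subst hij; simp; ring
  · simp [hij]

theorem pd_cosh_div_sq [Fintype ι] [DecidableEq ι] (a : ℝ) (j i : ι) (x : ι → ℝ) :
    pd (fun y => cosh (y j / a) ^ 2) i x =
      if i = j then 2 * sinh (x j / a) * cosh (x j / a) / a else 0 := by
  rw [pd_eq_of_hasFDerivAt
    ((hasDerivAt_cosh _).comp_div_const.fun_pow 2).hasFDerivAt_comp_apply]
  split_ifs with hij
  · subst hij; simp; ring
  · simp [hij]

end PartialDerivatives

section ART

variable (a : ℝ) (p : Fin 4 → ℝ)

theorem pd_sin_mul_cosh (i : Fin 4) :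
    pd (fun y => sin (y 2 / a) * cosh (y 1 / a)) i p =
      ![0, sin (p 2 / a) * sinh (p 1 / a) / a, cos (p 2 / a) * cosh (p 1 / a) / a, 0] i := by
  rw [pd_eq_of_hasFDerivAt
    (((hasDerivAt_sin _).comp_div_const.hasFDerivAt_comp_apply (j := 2)).fun_mul
      ((hasDerivAt_cosh _).comp_div_const.hasFDerivAt_comp_apply (j := 1)))]
  fin_cases i <;> simp <;> ring

theorem pd_neg_coth_mul_sin_mul_sinh (hp : sinh (p 0 / a) ≠ 0) (i : Fin 4) :
    pd (fun y => -(cosh (y 0 / a) / sinh (y 0 / a)) * sin (y 2 / a) * sinh (y 1 / a)) i p =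
      ![sin (p 2 / a) * sinh (p 1 / a) / (a * sinh (p 0 / a) ^ 2),
        -(cosh (p 0 / a) / sinh (p 0 / a)) * sin (p 2 / a) * cosh (p 1 / a) / a,
        -(cosh (p 0 / a) / sinh (p 0 / a)) * cos (p 2 / a) * sinh (p 1 / a) / a, 0] i := by
  rw [pd_eq_of_hasFDerivAt
    ((((hasDerivAt_coth hp).fun_neg.comp_div_const.hasFDerivAt_comp_apply (j := 0)).fun_mul
      ((hasDerivAt_sin _).comp_div_const.hasFDerivAt_comp_apply (j := 2))).fun_mul
      ((hasDerivAt_sinh _).comp_div_const.hasFDerivAt_comp_apply (j := 1)))]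
  fin_cases i <;> simp <;> ring

theorem pd_tanh_mul_cos_mul_cosh (i : Fin 4) :
    pd (fun y => tanh (y 0 / a) * cos (y 2 / a) * cosh (y 1 / a)) i p =
      ![cos (p 2 / a) * cosh (p 1 / a) / (a * cosh (p 0 / a) ^ 2),
        tanh (p 0 / a) * cos (p 2 / a) * sinh (p 1 / a) / a,
        -tanh (p 0 / a) * sin (p 2 / a) * cosh (p 1 / a) / a, 0] i := by
  rw [pd_eq_of_hasFDerivAt
    ((((hasDerivAt_tanh _).comp_div_const.hasFDerivAt_comp_apply (j := 0)).fun_mul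
      ((hasDerivAt_cos _).comp_div_const.hasFDerivAt_comp_apply (j := 2))).fun_mul
      ((hasDerivAt_cosh _).comp_div_const.hasFDerivAt_comp_apply (j := 1)))]
  fin_cases i <;> simp <;> ring

end ART

theorem ART_killing_general (a : ℝ)
    (g : (Fin 4 → ℝ) → Matrix (Fin 4) (Fin 4) ℝ)
    (hg : g = fun p => Matrix.diagonal
      ![-1, (Real.sinh (p 0 / a)) ^ 2, (Real.cosh (p 0 / a)) ^ 2, 1])
    (ξ : (Fin 4 → ℝ) → Fin 4 → ℝ)
    (hξ : ξ = fun p =>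
      ![Real.sin (p 2 / a) * Real.cosh (p 1 / a),
        -(Real.cosh (p 0 / a) / Real.sinh (p 0 / a)) *
          Real.sin (p 2 / a) * Real.sinh (p 1 / a),
        Real.tanh (p 0 / a) * Real.cos (p 2 / a) * Real.cosh (p 1 / a),
        0]) :
    ∀ p : Fin 4 → ℝ, Real.sinh (p 0 / a) ≠ 0 → lieD g ξ p = 0 := by
  subst hg hξ
  intro p hp
  have ha := ne_zero_of_sinh_div_ne_zero hp
  ext i j
  rw [lieD_diagonal]
  fin_cases i <;> fin_cases j <;>
    simp only [Fin.sum_univ_four, Fin.reduceFinMk, Matrix.cons_val, pd_const, pd_sinh_div_sq,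
      pd_cosh_div_sq, pd_sin_mul_cosh, pd_neg_coth_mul_sin_mul_sinh a p hp,
      pd_tanh_mul_cos_mul_cosh] <;>
    simp [tanh_eq_sinh_div_cosh] <;> field_simp <;> ring

/-- On the ART spacetime `g = −dt² + sinh²(t/a) dx² + cosh²(t/a) dy² + dz²`
(`a ≠ 0`), on the region `sinh(t/a) ≠ 0`, the vector field
`ξ = sin(y/a) cosh(x/a) ∂_t − coth(t/a) sin(y/a) sinh(x/a) ∂_x
  + tanh(t/a) cos(y/a) cosh(x/a) ∂_y` is a Killing vector field. -/
theorem ART_killing (a : ℝ) (ha : a ≠ 0)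
    (g : (Fin 4 → ℝ) → Matrix (Fin 4) (Fin 4) ℝ)
    (hg : g = fun p => Matrix.diagonal
      ![-1, (Real.sinh (p 0 / a)) ^ 2, (Real.cosh (p 0 / a)) ^ 2, 1])
    (ξ : (Fin 4 → ℝ) → Fin 4 → ℝ)
    (hξ : ξ = fun p =>
      ![Real.sin (p 2 / a) * Real.cosh (p 1 / a),
        -(Real.cosh (p 0 / a) / Real.sinh (p 0 / a)) *
          Real.sin (p 2 / a) * Real.sinh (p 1 / a),
        Real.tanh (p 0 / a) * Real.cos (p 2 / a) * Real.cosh (p 1 / a),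
        0]) :
    ∀ p : Fin 4 → ℝ, Real.sinh (p 0 / a) ≠ 0 → lieD g ξ p = 0 :=
  ART_killing_general a g hg ξ hξ
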